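/- The two-qubit state ρ_U = (1/4)(I⊗I + σ_x⊗σ_x) is separable, but K ρ_U K† is entangled, where K = (1/√2)·[[1,0,0,1],[0,√2,0,0],[0,0,√2,0],[−1,0,0,1]]; indeed the partial transpose of K ρ_U K† has eigenvalue (1−√2)/4 < 0. -/

import Mathlib

open Matrix
open scoped Kronecker ComplexOrder

noncomputable section

/-- A density matrix: positive semi-definite (hence Hermitian) with trace 1. -/
def IsDensity {n : Type*} [Fintype n] [DecidableEq n] (ρ : Matrix n n ℂ) : Prop :=
  ρ.PosSemidef ∧ ρ.trace = 1

/-- Separability: a convex combination of tensor products of density matrices. -/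
def SepState {d₁ d₂ : ℕ} (ρ : Matrix (Fin d₁ × Fin d₂) (Fin d₁ × Fin d₂) ℂ) : Prop :=
  ∃ (n : ℕ) (w : Fin n → ℝ) (σ₁ : Fin n → Matrix (Fin d₁) (Fin d₁) ℂ)
    (σ₂ : Fin n → Matrix (Fin d₂) (Fin d₂) ℂ),
    (∀ i, 0 ≤ w i) ∧ (∑ i, w i = 1) ∧ (∀ i, IsDensity (σ₁ i)) ∧ (∀ i, IsDensity (σ₂ i)) ∧
    ρ = ∑ i, (w i : ℂ) • (σ₁ i ⊗ₖ σ₂ i)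

/-- Partial transpose on the second tensor factor. -/
def ptransposeB {d₁ d₂ : ℕ} (ρ : Matrix (Fin d₁ × Fin d₂) (Fin d₁ × Fin d₂) ℂ) :
    Matrix (Fin d₁ × Fin d₂) (Fin d₁ × Fin d₂) ℂ :=
  Matrix.of fun p q => ρ (p.1, q.2) (q.1, p.2)

/-- The Pauli matrix `σ_x`. -/
def pauliX : Matrix (Fin 2) (Fin 2) ℂ := !![0, 1; 1, 0]

/-- `ρ_U = (1/4)(I⊗I + σ_x⊗σ_x)`. -/
def rhoU : Matrix (Fin 2 × Fin 2) (Fin 2 × Fin 2) ℂ :=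
  (4 : ℂ)⁻¹ • ((1 : Matrix (Fin 2 × Fin 2) (Fin 2 × Fin 2) ℂ) + pauliX ⊗ₖ pauliX)

/-- The unitary `K = (1/√2)[[1,0,0,1],[0,√2,0,0],[0,0,√2,0],[−1,0,0,1]]` in the
product basis `{|↑↑⟩,|↑↓⟩,|↓↑⟩,|↓↓⟩}`. -/
def Kmat : Matrix (Fin 2 × Fin 2) (Fin 2 × Fin 2) ℂ :=
  Matrix.of fun p q =>
    if p = ((0 : Fin 2), (0 : Fin 2)) then
      (if q = (0, 0) then ((Real.sqrt 2 : ℂ))⁻¹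
       else if q = (1, 1) then ((Real.sqrt 2 : ℂ))⁻¹ else 0)
    else if p = (0, 1) then (if q = (0, 1) then 1 else 0)
    else if p = (1, 0) then (if q = (1, 0) then 1 else 0)
    else
      (if q = (0, 0) then -((Real.sqrt 2 : ℂ))⁻¹
       else if q = (1, 1) then ((Real.sqrt 2 : ℂ))⁻¹ else 0)

/-!
In the Bell basis `ρ_U = ½(|Φ⁺⟩⟨Φ⁺| + |Ψ⁺⟩⟨Ψ⁺|)`, while in terms of the eigenvectors `|±⟩`
of `σ_x` it is `½(|++⟩⟨++| + |−−⟩⟨−−|)`, so it is separable.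
`K` sends `|Φ⁺⟩` to `|↑↑⟩` and fixes `|Ψ⁺⟩`, hence `K ρ_U K† = ½(|↑↑⟩⟨↑↑| + |Ψ⁺⟩⟨Ψ⁺|)`.
On `span {|↑↑⟩, |↓↓⟩}` its partial transpose is `¼ [[2, 1], [1, 0]]`, with eigenvalue
`(1 − √2)/4 < 0`; since the partial transpose of a separable state is positive semidefinite
(Peres–Horodecki), `K ρ_U K†` is entangled.
-/

section PartialTranspose

variable {d₁ d₂ : ℕ}

lemma ptransposeB_kronecker (A : Matrix (Fin d₁) (Fin d₁) ℂ) (B : Matrix (Fin d₂) (Fin d₂) ℂ) :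
    ptransposeB (A ⊗ₖ B) = A ⊗ₖ Bᵀ :=
  rfl

lemma ptransposeB_smul (c : ℂ) (ρ : Matrix (Fin d₁ × Fin d₂) (Fin d₁ × Fin d₂) ℂ) :
    ptransposeB (c • ρ) = c • ptransposeB ρ :=
  rfl

lemma ptransposeB_sum {ι : Type*} (s : Finset ι)
    (ρ : ι → Matrix (Fin d₁ × Fin d₂) (Fin d₁ × Fin d₂) ℂ) :
    ptransposeB (∑ i ∈ s, ρ i) = ∑ i ∈ s, ptransposeB (ρ i) := by
  ext p q
  simp only [ptransposeB, of_apply, Matrix.sum_apply]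

theorem SepState.posSemidef_ptransposeB {ρ : Matrix (Fin d₁ × Fin d₂) (Fin d₁ × Fin d₂) ℂ}
    (h : SepState ρ) : (ptransposeB ρ).PosSemidef := by
  obtain ⟨n, w, σ₁, σ₂, hw, -, hσ₁, hσ₂, rfl⟩ := h
  rw [ptransposeB_sum]
  refine posSemidef_sum _ fun i _ => ?_
  rw [ptransposeB_smul, ptransposeB_kronecker]
  exact ((hσ₁ i).1.kronecker (hσ₂ i).1.transpose).smul (Complex.zero_le_real.mpr (hw i))

end PartialTranspose

lemma Matrix.PosSemidef.nonneg_of_mulVec_eq_smul {𝕜 n : Type*} [RCLike 𝕜] [Fintype n]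
    {A : Matrix n n 𝕜} (hA : A.PosSemidef) {v : n → 𝕜} (hv : v ≠ 0) {μ : ℝ}
    (h : A *ᵥ v = (μ : 𝕜) • v) : 0 ≤ μ := by
  obtain ⟨r, hr, hrv⟩ := RCLike.pos_iff_exists_ofReal.mp (dotProduct_star_self_pos_iff.mpr hv)
  have hquad := hA.dotProduct_mulVec_nonneg v
  rw [h, dotProduct_smul, smul_eq_mul, ← hrv, ← RCLike.ofReal_mul, RCLike.ofReal_nonneg] at hquad
  exact (mul_nonneg_iff_of_pos_right hr).mp hquad

theorem not_sepState_of_ptransposeB_mulVec_eq_smul {d₁ d₂ : ℕ}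
    {ρ : Matrix (Fin d₁ × Fin d₂) (Fin d₁ × Fin d₂) ℂ} {v : Fin d₁ × Fin d₂ → ℂ} (hv : v ≠ 0)
    {μ : ℝ} (hμ : μ < 0) (h : ptransposeB ρ *ᵥ v = (μ : ℂ) • v) : ¬ SepState ρ := fun hsep =>
  hμ.not_ge (hsep.posSemidef_ptransposeB.nonneg_of_mulVec_eq_smul hv h)

open scoped MatrixOrder in
lemma Matrix.IsHermitian.posSemidef_of_isIdempotentElem {𝕜 n : Type*} [RCLike 𝕜] [Fintype n]
    {P : Matrix n n 𝕜} (hP : P.IsHermitian) (hP' : IsIdempotentElem P) : P.PosSemidef :=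
  nonneg_iff_posSemidef.mp (IsStarProjection.nonneg ⟨hP', hP⟩)

lemma pauliX_mul_self : pauliX * pauliX = 1 := by
  ext i j
  fin_cases i <;> fin_cases j <;> simp [pauliX]

lemma isHermitian_pauliX : pauliX.IsHermitian := by
  ext i j
  fin_cases i <;> fin_cases j <;> simp [pauliX]

lemma trace_pauliX : pauliX.trace = 0 := by
  simp [pauliX, trace_fin_two]

/-- For `s = ±1`, the projection onto the `s`-eigenvector `|±⟩` of `σ_x`. -/
def xProjection (s : ℝ) : Matrix (Fin 2) (Fin 2) ℂ :=
  (2⁻¹ : ℂ) • (1 + (s : ℂ) • pauliX)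

lemma isDensity_xProjection {s : ℝ} (hs : s ^ 2 = 1) : IsDensity (xProjection s) := by
  have hs' : (s : ℂ) ^ 2 = 1 := by exact_mod_cast hs
  have herm : (xProjection s).IsHermitian := by
    simp [xProjection, IsHermitian, conjTranspose_smul, isHermitian_pauliX.eq]
  refine ⟨herm.posSemidef_of_isIdempotentElem ?_, ?_⟩
  · simp only [IsIdempotentElem, xProjection, add_mul, mul_add, mul_one, one_mul,
      smul_mul_assoc, mul_smul_comm, smul_smul, pauliX_mul_self]
    linear_combination (norm := module) ((4⁻¹ : ℂ) * hs') • (1 : Matrix (Fin 2) (Fin 2) ℂ)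
  · simp [xProjection, trace_pauliX]

lemma rhoU_eq_xProjection :
    rhoU = (2⁻¹ : ℂ) • (xProjection 1 ⊗ₖ xProjection 1) +
      (2⁻¹ : ℂ) • (xProjection (-1) ⊗ₖ xProjection (-1)) := by
  simp only [rhoU, xProjection, Complex.ofReal_one, Complex.ofReal_neg, smul_kronecker,
    kronecker_smul, add_kronecker, kronecker_add, one_kronecker_one]
  module

theorem sepState_rhoU : SepState rhoU := by
  have hdens : ∀ i, IsDensity (![xProjection 1, xProjection (-1)] i) :=
    Fin.forall_fin_two.mpr
      ⟨isDensity_xProjection (by norm_num), isDensity_xProjection (by norm_num)⟩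
  refine ⟨2, fun _ => 2⁻¹, _, _, fun _ => by norm_num, by norm_num, hdens, hdens, ?_⟩
  rw [rhoU_eq_xProjection, Fin.sum_univ_two]
  push_cast
  rfl

def conjugatedRhoU : Matrix (Fin 2 × Fin 2) (Fin 2 × Fin 2) ℂ :=
  Matrix.of fun p q =>
    if p = ((0 : Fin 2), (0 : Fin 2)) ∧ q = (0, 0) then 1 / 2
    else if (p = ((0 : Fin 2), (1 : Fin 2)) ∨ p = (1, 0)) ∧ (q = (0, 1) ∨ q = (1, 0)) then 1 / 4
    else 0

lemma Kmat_mul_rhoU_mul_conjTranspose : Kmat * rhoU * Kmatᴴ = conjugatedRhoU := by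
  have hinv : ((√2 : ℝ) : ℂ)⁻¹ ^ 2 = 2⁻¹ := by norm_cast; simp
  ext ⟨a, b⟩ ⟨c, d⟩
  fin_cases a <;> fin_cases b <;> fin_cases c <;> fin_cases d <;>
    simp [conjugatedRhoU, Kmat, rhoU, pauliX, mul_apply, Fintype.sum_prod_type, one_apply]
  linear_combination hinv

def negEigenvector : Fin 2 × Fin 2 → ℂ := fun p =>
  if p = ((0 : Fin 2), (0 : Fin 2)) then ((1 - √2 : ℝ) : ℂ) else if p = (1, 1) then 1 else 0

lemma negEigenvector_ne_zero : negEigenvector ≠ 0 :=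
  fun h => by simpa [negEigenvector] using congrFun h (1, 1)

lemma ptransposeB_conjugatedRhoU_mulVec_negEigenvector :
    ptransposeB conjugatedRhoU *ᵥ negEigenvector =
      (((1 - √2) / 4 : ℝ) : ℂ) • negEigenvector := by
  have hs : ((√2 : ℝ) : ℂ) ^ 2 = 2 := by norm_cast; simp
  ext ⟨a, b⟩
  fin_cases a <;> fin_cases b <;>
    simp [ptransposeB, conjugatedRhoU, negEigenvector, mulVec, dotProduct, Fintype.sum_prod_type]
  · linear_combination (-4⁻¹ : ℂ) * hs
  · ring

/-- `ρ_U` is separable, but `K ρ_U K†` is entangled: its partial transpose has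
the negative eigenvalue `(1−√2)/4`. -/
theorem rhoU_separable_but_conjugate_entangled :
    SepState rhoU ∧ ¬ SepState (Kmat * rhoU * Kmatᴴ) ∧
      ∃ v : Fin 2 × Fin 2 → ℂ, v ≠ 0 ∧
        ptransposeB (Kmat * rhoU * Kmatᴴ) *ᵥ v =
          (((1 - Real.sqrt 2) / 4 : ℝ) : ℂ) • v := by
  have heig := ptransposeB_conjugatedRhoU_mulVec_negEigenvector
  rw [← Kmat_mul_rhoU_mul_conjTranspose] at heig
  have hneg : (1 - √2) / 4 < 0 := by linarith [Real.one_lt_sqrt_two]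
  exact ⟨sepState_rhoU,
    not_sepState_of_ptransposeB_mulVec_eq_smul negEigenvector_ne_zero hneg heig,
    negEigenvector, negEigenvector_ne_zero, heig⟩
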